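/- Let A = {a_s(n_s)}_{s=1}^k be a finite system of residue classes, let m_1,...,m_k ∈ ℤ, and let f(x_1,...,x_k) ∈ ℂ[x_1,...,x_k] have total degree at most m(A). For z ∈ ℤ put I_z = {1 ≤ s ≤ k : z ≡ a_s (mod n_s)}. If for every z ∈ ℤ the coefficient of the monomial ∏_{s∈I_z} x_s in f is 0, then for every real θ with 0 ≤ θ < 1 one has ψ(θ) := Σ_{I ⊆ {1,...,k}, {Σ_{s∈I} m_s/n_s} = θ} (−1)^{|I|} f([1∈I],...,[k∈I]) e^{2πi Σ_{s∈I} a_s m_s/n_s} = 0. -/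

import Mathlib

open Finset

noncomputable def EE (q : ℚ) : ℂ := Complex.exp (2 * Real.pi * Complex.I * (q : ℂ))

lemma EE_add (p q : ℚ) : EE (p + q) = EE p * EE q := by
  rw [EE, EE, EE, ← Complex.exp_add]
  push_cast
  ring_nf

lemma EE_zero : EE 0 = 1 := by simp [EE]

lemma EE_int (c : ℤ) : EE c = 1 := by
  have h := Complex.exp_int_mul_two_pi_mul_I c
  rw [EE, ← h]
  push_cast
  ring_nf

lemma EE_eq_one_iff (q : ℚ) : EE q = 1 ↔ ∃ c : ℤ, q = c := by
  rw [EE, Complex.exp_eq_one_iff]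
  constructor
  · rintro ⟨c, hc⟩
    refine ⟨c, ?_⟩
    have h2 : (2 * (Real.pi : ℂ) * Complex.I) ≠ 0 := by
      simp [Real.pi_ne_zero, Complex.I_ne_zero]
    have h3 : (2 * (Real.pi : ℂ) * Complex.I) * q = (2 * (Real.pi : ℂ) * Complex.I) * c := by
      linear_combination hc
    have : (q : ℂ) = c := mul_left_cancel₀ h2 h3
    exact_mod_cast this
  · rintro ⟨c, rfl⟩
    exact ⟨c, by push_cast; ring⟩

lemma EE_sum {ι : Type*} (I : Finset ι) (g : ι → ℚ) :
    EE (∑ s ∈ I, g s) = ∏ s ∈ I, EE (g s) := by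
  induction I using Finset.cons_induction with
  | empty => simp [EE_zero]
  | cons s I hs ih => simp [Finset.sum_cons, Finset.prod_cons, EE_add, ih]

lemma EE_nat_mul (z : ℕ) (q : ℚ) : EE (z * q) = EE q ^ z := by
  induction z with
  | zero => simp [EE_zero]
  | succ t ih =>
      have : ((t + 1 : ℕ) : ℚ) * q = t * q + q := by push_cast; ring
      rw [this, EE_add, ih, pow_succ]

lemma EE_add_int (q : ℚ) (c : ℤ) : EE (q + c) = EE q := by
  rw [EE_add, EE_int, mul_one]
open scoped Classical in
lemma sum_superset_neg {k : ℕ} (A : Finset (Fin k)) (r : Fin k → ℂ) :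
    ∑ I ∈ Finset.univ.filter (fun I : Finset (Fin k) => A ⊆ I),
      (-1 : ℂ) ^ I.card * ∏ s ∈ I, r s
    = (-1) ^ A.card * (∏ s ∈ A, r s) * ∏ s ∈ Aᶜ, (1 - r s) := by
  have hrhs : ∏ s ∈ Aᶜ, (1 - r s)
      = ∑ J ∈ Aᶜ.powerset, (-1 : ℂ) ^ J.card * ∏ s ∈ J, r s := by
    have h1 : ∀ s ∈ Aᶜ, (1 - r s) = (-r s) + 1 := fun s _ => by ring
    rw [Finset.prod_congr rfl h1, Finset.prod_add]
    refine Finset.sum_congr rfl fun J hJ => ?_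
    rw [Finset.prod_const_one, mul_one]
    calc ∏ i ∈ J, -r i = ∏ i ∈ J, ((-1) * r i) := by
          refine Finset.prod_congr rfl fun i _ => by ring
      _ = (-1 : ℂ) ^ J.card * ∏ s ∈ J, r s := by
          rw [Finset.prod_mul_distrib, Finset.prod_const]
  rw [hrhs, Finset.mul_sum, eq_comm]
  refine Finset.sum_nbij' (fun J => A ∪ J) (fun I => I \ A) ?_ ?_ ?_ ?_ ?_
  · intro J hJ
    simp
  · intro I hI
    simp only [Finset.mem_filter, Finset.mem_univ, true_and] at hI
    simp only [Finset.mem_powerset]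
    intro x hx
    simp only [Finset.mem_sdiff] at hx
    simp [Finset.mem_compl, hx.2]
  · intro J hJ
    simp only [Finset.mem_powerset] at hJ
    have hd : Disjoint A J := by
      rw [Finset.disjoint_right]
      intro x hx
      exact Finset.mem_compl.mp (hJ hx)
    exact Finset.union_sdiff_cancel_left hd
  · intro I hI
    simp only [Finset.mem_filter, Finset.mem_univ, true_and] at hI
    exact Finset.union_sdiff_of_subset hI
  · intro J hJ
    simp only [Finset.mem_powerset] at hJ
    have hd : Disjoint A J := by
      rw [Finset.disjoint_right]
      intro x hx
      exact Finset.mem_compl.mp (hJ hx)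
    rw [Finset.card_union_of_disjoint hd, Finset.prod_union hd, pow_add]
    ring

open scoped Classical in
lemma S_zero (k : ℕ) (a : Fin k → ℤ) (n : Fin k → ℕ) (hn : ∀ s, 0 < n s)
    (m : Fin k → ℤ) (f : MvPolynomial (Fin k) ℂ)
    (hdeg : f.totalDegree ≤
      sInf (Set.range fun x : ℤ =>
        (Finset.univ.filter fun s : Fin k => (n s : ℤ) ∣ x - a s).card))
    (hcoeff : ∀ z : ℤ,
      MvPolynomial.coeff
        (∑ s ∈ Finset.univ.filter (fun s : Fin k => (n s : ℤ) ∣ z - a s),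
          Finsupp.single s 1) f = 0)
    (z : ℤ) (r : Fin k → ℂ)
    (hr1 : ∀ s, (n s : ℤ) ∣ z - a s → r s = 1) :
    ∑ I : Finset (Fin k), (-1 : ℂ) ^ I.card *
      MvPolynomial.eval (fun s => if s ∈ I then (1 : ℂ) else 0) f * ∏ s ∈ I, r s = 0 := by
  set w : Finset (Fin k) := Finset.univ.filter (fun s : Fin k => (n s : ℤ) ∣ z - a s) with hw
  have hprod : ∀ (I : Finset (Fin k)) (α : Fin k →₀ ℕ),
      ∏ i ∈ α.support, (if i ∈ I then (1 : ℂ) else 0) ^ α i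
        = if α.support ⊆ I then 1 else 0 := by
    intro I α
    by_cases h : α.support ⊆ I
    · rw [if_pos h]
      exact Finset.prod_eq_one fun i hi => by rw [if_pos (h hi), one_pow]
    · rw [if_neg h]
      obtain ⟨i, hi, hiI⟩ := Finset.not_subset.mp h
      refine Finset.prod_eq_zero hi ?_
      rw [if_neg hiI, zero_pow (Finsupp.mem_support_iff.mp hi)]
  have step1 : ∑ I : Finset (Fin k), (-1 : ℂ) ^ I.card *
      MvPolynomial.eval (fun s => if s ∈ I then (1 : ℂ) else 0) f * ∏ s ∈ I, r s
      = ∑ α ∈ f.support, MvPolynomial.coeff α f *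
          ((-1) ^ α.support.card * (∏ s ∈ α.support, r s) *
            ∏ s ∈ α.support ᶜ, (1 - r s)) := by
    have e1 : ∀ I : Finset (Fin k), (-1 : ℂ) ^ I.card *
        MvPolynomial.eval (fun s => if s ∈ I then (1 : ℂ) else 0) f * ∏ s ∈ I, r s
        = ∑ α ∈ f.support, (if α.support ⊆ I then
            MvPolynomial.coeff α f * ((-1) ^ I.card * ∏ s ∈ I, r s) else 0) := by
      intro I
      rw [MvPolynomial.eval_eq, Finset.mul_sum, Finset.sum_mul]
      refine Finset.sum_congr rfl fun α hα => ?_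
      rw [hprod I α]
      by_cases h : α.support ⊆ I
      · rw [if_pos h, if_pos h]; ring
      · rw [if_neg h, if_neg h]; ring
    rw [Finset.sum_congr rfl fun I _ => e1 I, Finset.sum_comm]
    refine Finset.sum_congr rfl fun α hα => ?_
    rw [← Finset.sum_filter, ← Finset.mul_sum, sum_superset_neg]
  rw [step1]
  refine Finset.sum_eq_zero fun α hα => ?_
  by_cases hsub : w ⊆ α.support
  · -- all cardinalities coincide; the coefficient vanishes
    have h1 : (α.sum fun _ e => e) ≤ f.totalDegree := MvPolynomial.le_totalDegree hα
    have h2 : sInf (Set.range fun x : ℤ =>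
        (Finset.univ.filter fun s : Fin k => (n s : ℤ) ∣ x - a s).card) ≤ w.card :=
      Nat.sInf_le ⟨z, rfl⟩
    have h3 : w.card ≤ α.support.card := Finset.card_le_card hsub
    have hsum : (α.sum fun _ e => e) = ∑ s ∈ α.support, α s := rfl
    have h4 : α.support.card ≤ α.sum fun _ e => e := by
      rw [hsum, Finset.card_eq_sum_ones]
      exact Finset.sum_le_sum fun i hi =>
        Nat.one_le_iff_ne_zero.mpr (Finsupp.mem_support_iff.mp hi)
    have hle : α.support.card ≤ w.card := h4.trans (h1.trans (hdeg.trans h2))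
    have hwA : w = α.support := Finset.eq_of_subset_of_card_le hsub hle
    have hsumeq : ∑ s ∈ α.support, (1 : ℕ) = ∑ s ∈ α.support, α s := by
      have h5 : (α.sum fun _ e => e) = α.support.card :=
        le_antisymm (h1.trans (hdeg.trans (h2.trans h3))) h4
      rw [← Finset.card_eq_sum_ones, ← h5, hsum]
    have hα1 : ∀ t ∈ α.support, (1 : ℕ) = α t :=
      (Finset.sum_eq_sum_iff_of_le fun i hi =>
        Nat.one_le_iff_ne_zero.mpr (Finsupp.mem_support_iff.mp hi)).mp hsumeq
    have hαeq : α = ∑ s ∈ w, Finsupp.single s 1 := by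
      ext t
      rw [Finset.sum_apply']
      simp only [Finsupp.single_apply]
      rw [Finset.sum_ite_eq' w t (fun _ => (1 : ℕ))]
      by_cases ht : t ∈ α.support
      · rw [if_pos (hwA ▸ ht), ← hα1 t ht]
      · rw [if_neg (fun h => ht (hwA ▸ h)), Finsupp.notMem_support_iff.mp ht]
    have hc := hcoeff z
    rw [← hw] at hc
    rw [hαeq, hc, zero_mul]
  · obtain ⟨s, hsw, hsA⟩ := Finset.not_subset.mp hsub
    have hrs : r s = 1 := hr1 s (by simpa [hw] using hsw)
    have : ∏ t ∈ α.support ᶜ, (1 - r t) = 0 :=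
      Finset.prod_eq_zero (Finset.mem_compl.mpr hsA) (by rw [hrs, sub_self])
    rw [this]; ring

open scoped Classical in
/-- **Lemma 4.1, forward direction.**
Let `A = {a s (n s)}_{s=1}^k`, let `m₁,…,m_k ∈ ℤ`, and let `f ∈ ℂ[x₁,…,x_k]` have total
degree at most the covering multiplicity `m(A) = min_x w_A(x)`.  If for every `z ∈ ℤ`
the coefficient of `∏_{s∈I_z} x_s` in `f` vanishes (where
`I_z = {s : z ≡ a_s (mod n_s)}`), then for every `θ ∈ [0,1)` we have
`ψ(θ) = ∑_{I, {∑_{s∈I} m_s/n_s} = θ} (−1)^{|I|} f([1∈I],…,[k∈I])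
e^{2πi ∑_{s∈I} a_s m_s/n_s} = 0`. -/
theorem stmt14 (k : ℕ) (a : Fin k → ℤ) (n : Fin k → ℕ) (hn : ∀ s, 0 < n s)
    (m : Fin k → ℤ) (f : MvPolynomial (Fin k) ℂ)
    (hdeg : f.totalDegree ≤
      sInf (Set.range fun x : ℤ =>
        (Finset.univ.filter fun s : Fin k => (n s : ℤ) ∣ x - a s).card))
    (hcoeff : ∀ z : ℤ,
      MvPolynomial.coeff
        (∑ s ∈ Finset.univ.filter (fun s : Fin k => (n s : ℤ) ∣ z - a s),
          Finsupp.single s 1) f = 0) :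
    ∀ θ : ℝ, 0 ≤ θ → θ < 1 →
      ∑ I ∈ Finset.univ.filter (fun I : Finset (Fin k) =>
          ((Int.fract (∑ s ∈ I, (m s : ℚ) / (n s : ℚ)) : ℚ) : ℝ) = θ),
        (-1 : ℂ) ^ I.card *
          MvPolynomial.eval (fun s => if s ∈ I then (1 : ℂ) else 0) f *
          Complex.exp (2 * Real.pi * Complex.I *
            ((∑ s ∈ I, (a s * m s : ℚ) / (n s : ℚ) : ℚ) : ℂ)) = 0 := by
  intro θ hθ0 hθ1
  have hEE : ∀ q : ℚ, Complex.exp (2 * Real.pi * Complex.I * (q : ℂ)) = EE q := fun _ => rfl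
  simp only [hEE]
  by_cases hne : (Finset.univ.filter (fun I : Finset (Fin k) =>
      ((Int.fract (∑ s ∈ I, (m s : ℚ) / (n s : ℚ)) : ℚ) : ℝ) = θ)) = ∅
  · rw [hne, Finset.sum_empty]
  obtain ⟨I₀, hI₀⟩ := Finset.nonempty_iff_ne_empty.mpr hne
  set t : ℚ := Int.fract (∑ s ∈ I₀, (m s : ℚ) / (n s : ℚ)) with ht
  have hθt : θ = (t : ℝ) := ((Finset.mem_filter.mp hI₀).2).symm
  have ht0 : 0 ≤ t := Int.fract_nonneg _
  have ht1 : t < 1 := Int.fract_lt_one _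
  set N : ℕ := ∏ s : Fin k, n s with hNdef
  have hN0 : 0 < N := Finset.prod_pos fun s _ => hn s
  -- integrality of N * (sum of m_s / n_s)
  have hNq : ∀ I : Finset (Fin k),
      ∃ c : ℤ, (N : ℚ) * ∑ s ∈ I, (m s : ℚ) / (n s : ℚ) = (c : ℚ) := by
    intro I
    refine ⟨∑ s ∈ I, m s * ((N / n s : ℕ) : ℤ), ?_⟩
    rw [Finset.mul_sum, Int.cast_sum]
    refine Finset.sum_congr rfl fun s _ => ?_
    have hd : n s ∣ N := Finset.dvd_prod_of_mem n (Finset.mem_univ s)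
    have hns : ((n s : ℚ)) ≠ 0 := by exact_mod_cast (hn s).ne'
    have hcd : ((N / n s : ℕ) : ℚ) = (N : ℚ) / (n s : ℚ) := by
      rw [Nat.cast_div hd hns]
    rw [Int.cast_mul, Int.cast_natCast, hcd]
    field_simp
  have hfr : ∀ I : Finset (Fin k),
      ∃ c : ℤ, (N : ℚ) * Int.fract (∑ s ∈ I, (m s : ℚ) / (n s : ℚ)) = (c : ℚ) := by
    intro I
    obtain ⟨c, hc⟩ := hNq I
    refine ⟨c - N * ⌊∑ s ∈ I, (m s : ℚ) / (n s : ℚ)⌋, ?_⟩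
    rw [Int.fract]
    push_cast
    linear_combination hc
  -- geometric sum
  have hgeom : ∀ I : Finset (Fin k),
      ∑ z ∈ Finset.range N,
        EE ((z : ℚ) * (t - Int.fract (∑ s ∈ I, (m s : ℚ) / (n s : ℚ))))
      = if Int.fract (∑ s ∈ I, (m s : ℚ) / (n s : ℚ)) = t then (N : ℂ) else 0 := by
    intro I
    set u : ℚ := t - Int.fract (∑ s ∈ I, (m s : ℚ) / (n s : ℚ)) with hu
    by_cases h : Int.fract (∑ s ∈ I, (m s : ℚ) / (n s : ℚ)) = t
    · rw [if_pos h]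
      have hu0 : u = 0 := by rw [hu, h, sub_self]
      simp [hu0, EE_zero]
    · rw [if_neg h]
      have hu0 : u ≠ 0 := sub_ne_zero.mpr (Ne.symm h)
      have hb1 : u < 1 := by
        have := Int.fract_nonneg (∑ s ∈ I, (m s : ℚ) / (n s : ℚ))
        rw [hu]; linarith
      have hb2 : -1 < u := by
        have := Int.fract_lt_one (∑ s ∈ I, (m s : ℚ) / (n s : ℚ))
        rw [hu]; linarith
      have h1 : EE u ≠ 1 := by
        intro hone
        obtain ⟨c, hc⟩ := (EE_eq_one_iff u).mp hone
        rw [hc] at hb1 hb2 hu0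
        have hc1' : c < 1 := by exact_mod_cast hb1
        have hc2' : -1 < c := by exact_mod_cast hb2
        have : c = 0 := by omega
        exact hu0 (by rw [this]; norm_num)
      have hNu : EE u ^ N = 1 := by
        rw [← EE_nat_mul]
        obtain ⟨c1, hc1⟩ := hfr I₀
        obtain ⟨c2, hc2⟩ := hfr I
        rw [← ht] at hc1
        have harg : (N : ℚ) * u = ((c1 - c2 : ℤ) : ℚ) := by
          rw [hu]; push_cast; linear_combination hc1 - hc2
        rw [harg, EE_int]
      calc ∑ z ∈ Finset.range N, EE ((z : ℚ) * u)
          = ∑ z ∈ Finset.range N, EE u ^ z :=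
            Finset.sum_congr rfl fun z _ => EE_nat_mul z u
        _ = (EE u ^ N - 1) / (EE u - 1) := geom_sum_eq h1 N
        _ = 0 := by rw [hNu, sub_self, zero_div]
  -- S z = 0 instances
  have hS : ∀ z : ℕ, ∑ I : Finset (Fin k), (-1 : ℂ) ^ I.card *
      MvPolynomial.eval (fun s => if s ∈ I then (1 : ℂ) else 0) f *
      ∏ s ∈ I, EE ((m s : ℚ) * ((a s : ℚ) - (z : ℚ)) / (n s : ℚ)) = 0 := by
    intro z
    refine S_zero k a n hn m f hdeg hcoeff (z : ℤ) _ ?_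
    intro s hdvd
    obtain ⟨c, hc⟩ := hdvd
    have hns : ((n s : ℚ)) ≠ 0 := by exact_mod_cast (hn s).ne'
    have hzc : ((z : ℚ)) - (a s : ℚ) = (n s : ℚ) * (c : ℚ) := by exact_mod_cast hc
    have harg : (m s : ℚ) * ((a s : ℚ) - (z : ℚ)) / (n s : ℚ) = ((-(m s * c) : ℤ) : ℚ) := by
      field_simp
      push_cast
      linear_combination (-(m s : ℚ)) * hzc
    rw [harg, EE_int]
  -- product-to-EE conversion
  have hprodEE : ∀ (I : Finset (Fin k)) (z : ℕ),
      ∏ s ∈ I, EE ((m s : ℚ) * ((a s : ℚ) - (z : ℚ)) / (n s : ℚ))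
      = EE ((∑ s ∈ I, (a s * m s : ℚ) / (n s : ℚ))
            - (z : ℚ) * ∑ s ∈ I, (m s : ℚ) / (n s : ℚ)) := by
    intro I z
    rw [← EE_sum]
    congr 1
    rw [Finset.mul_sum, ← Finset.sum_sub_distrib]
    refine Finset.sum_congr rfl fun s _ => ?_
    ring
  -- main computation
  have key : ∑ I : Finset (Fin k),
      ((-1 : ℂ) ^ I.card *
        MvPolynomial.eval (fun s => if s ∈ I then (1 : ℂ) else 0) f *
        EE (∑ s ∈ I, (a s * m s : ℚ) / (n s : ℚ))) *
      (if Int.fract (∑ s ∈ I, (m s : ℚ) / (n s : ℚ)) = t then (N : ℂ) else 0) = 0 := by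
    calc ∑ I : Finset (Fin k),
        ((-1 : ℂ) ^ I.card *
          MvPolynomial.eval (fun s => if s ∈ I then (1 : ℂ) else 0) f *
          EE (∑ s ∈ I, (a s * m s : ℚ) / (n s : ℚ))) *
        (if Int.fract (∑ s ∈ I, (m s : ℚ) / (n s : ℚ)) = t then (N : ℂ) else 0)
        = ∑ I : Finset (Fin k), ∑ z ∈ Finset.range N,
            ((-1 : ℂ) ^ I.card *
              MvPolynomial.eval (fun s => if s ∈ I then (1 : ℂ) else 0) f *
              ∏ s ∈ I, EE ((m s : ℚ) * ((a s : ℚ) - (z : ℚ)) / (n s : ℚ))) *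
            EE ((z : ℚ) * t) := by
          refine Finset.sum_congr rfl fun I _ => ?_
          rw [← hgeom I, Finset.mul_sum]
          refine Finset.sum_congr rfl fun z _ => ?_
          rw [hprodEE I z]
          have hsplit : EE ((∑ s ∈ I, (a s * m s : ℚ) / (n s : ℚ))
              - (z : ℚ) * ∑ s ∈ I, (m s : ℚ) / (n s : ℚ)) * EE ((z : ℚ) * t)
              = EE (∑ s ∈ I, (a s * m s : ℚ) / (n s : ℚ)) *
                EE ((z : ℚ) * (t - Int.fract (∑ s ∈ I, (m s : ℚ) / (n s : ℚ)))) := by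
            rw [← EE_add, ← EE_add]
            have harg : (∑ s ∈ I, (a s * m s : ℚ) / (n s : ℚ))
                + (z : ℚ) * (t - Int.fract (∑ s ∈ I, (m s : ℚ) / (n s : ℚ)))
                = ((∑ s ∈ I, (a s * m s : ℚ) / (n s : ℚ))
                    - (z : ℚ) * ∑ s ∈ I, (m s : ℚ) / (n s : ℚ) + (z : ℚ) * t)
                  + (((z : ℤ) * ⌊∑ s ∈ I, (m s : ℚ) / (n s : ℚ)⌋ : ℤ) : ℚ) := by
              rw [Int.fract]
              push_cast
              ring
            rw [harg, EE_add_int]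
          linear_combination
            (-((-1 : ℂ) ^ I.card *
              MvPolynomial.eval (fun s => if s ∈ I then (1 : ℂ) else 0) f)) * hsplit
      _ = ∑ z ∈ Finset.range N, (∑ I : Finset (Fin k),
            (-1 : ℂ) ^ I.card *
              MvPolynomial.eval (fun s => if s ∈ I then (1 : ℂ) else 0) f *
              ∏ s ∈ I, EE ((m s : ℚ) * ((a s : ℚ) - (z : ℚ)) / (n s : ℚ))) *
            EE ((z : ℚ) * t) := by
          rw [Finset.sum_comm]
          exact Finset.sum_congr rfl fun z _ => by rw [Finset.sum_mul]
      _ = 0 := by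
          refine Finset.sum_eq_zero fun z _ => ?_
          rw [hS z, zero_mul]
  -- finish
  have hfil : (Finset.univ.filter (fun I : Finset (Fin k) =>
      ((Int.fract (∑ s ∈ I, (m s : ℚ) / (n s : ℚ)) : ℚ) : ℝ) = θ))
      = (Finset.univ.filter (fun I : Finset (Fin k) =>
      Int.fract (∑ s ∈ I, (m s : ℚ) / (n s : ℚ)) = t)) := by
    refine Finset.filter_congr fun I _ => ?_
    rw [hθt]
    exact ⟨fun h => by exact_mod_cast h, fun h => by exact_mod_cast h⟩
  rw [hfil]
  have key2 : (∑ I ∈ Finset.univ.filter (fun I : Finset (Fin k) =>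
      Int.fract (∑ s ∈ I, (m s : ℚ) / (n s : ℚ)) = t),
        (-1 : ℂ) ^ I.card *
          MvPolynomial.eval (fun s => if s ∈ I then (1 : ℂ) else 0) f *
          EE (∑ s ∈ I, (a s * m s : ℚ) / (n s : ℚ))) * (N : ℂ) = 0 := by
    calc (∑ I ∈ Finset.univ.filter (fun I : Finset (Fin k) =>
            Int.fract (∑ s ∈ I, (m s : ℚ) / (n s : ℚ)) = t),
          (-1 : ℂ) ^ I.card *
            MvPolynomial.eval (fun s => if s ∈ I then (1 : ℂ) else 0) f *
            EE (∑ s ∈ I, (a s * m s : ℚ) / (n s : ℚ))) * (N : ℂ)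
        = ∑ I : Finset (Fin k),
            ((-1 : ℂ) ^ I.card *
              MvPolynomial.eval (fun s => if s ∈ I then (1 : ℂ) else 0) f *
              EE (∑ s ∈ I, (a s * m s : ℚ) / (n s : ℚ))) *
            (if Int.fract (∑ s ∈ I, (m s : ℚ) / (n s : ℚ)) = t then (N : ℂ) else 0) := by
          rw [Finset.sum_mul, Finset.sum_filter]
          refine Finset.sum_congr rfl fun I _ => ?_
          by_cases h : Int.fract (∑ s ∈ I, (m s : ℚ) / (n s : ℚ)) = t
          · rw [if_pos h, if_pos h]
          · rw [if_neg h, if_neg h, mul_zero]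
      _ = 0 := key
  have hNc : ((N : ℂ)) ≠ 0 := by exact_mod_cast hN0.ne'
  exact (mul_eq_zero.mp key2).resolve_right hNc
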